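/- arXiv:1506.05885 — 3 statements merged into one kernel-verified Lean document; each statement's English description precedes it below -/
import Mathlib

section
/- If B : X → ℝ is a differentiable barrier function for the dynamical system ẋ = f(x,d) such that B(x) ≤ 0 for all x in the initial set X₀, B(x) > 0 for all x in the unsafe set Xᵤ, and for all x ∈ X and d ∈ D, B(x) = 0 implies ⟨∇B(x), f(x,d)⟩ < 0, then every solution x(t) of the ODE with x(0) ∈ X₀ and constant disturbance d ∈ D satisfies B(x(t)) ≤ 0 for all t ≥ 0; in particular x(t) never enters Xᵤ. -/
/-! The function `t ↦ B (x t)` starts nonpositive and, by the chain rule, has negative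
derivative at each of its zeros, so it can never cross zero upwards: this is Mathlib's
fencing comparison `image_le_of_deriv_right_lt_deriv_boundary` against the zero function. -/

open Set

theorem nonpos_of_hasDerivAt_neg_of_eq_zero {g g' : ℝ → ℝ}
    (hg : ∀ t ≥ (0 : ℝ), HasDerivAt g (g' t) t) (h₀ : g 0 ≤ 0)
    (hzero : ∀ t ≥ (0 : ℝ), g t = 0 → g' t < 0) :
    ∀ t ≥ (0 : ℝ), g t ≤ 0 := by
  intro T hT
  have hcont : ContinuousOn g (Icc 0 T) := fun t ht => (hg t ht.1).continuousAt.continuousWithinAt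
  exact image_le_of_deriv_right_lt_deriv_boundary (B' := fun _ => 0) hcont
    (fun t ht => (hg t ht.1).hasDerivWithinAt) h₀ (fun _ => hasDerivAt_const _ _)
    (fun t ht => hzero t ht.1) ⟨hT, le_rfl⟩

theorem HasGradientAt.comp_hasDerivAt {F : Type*} [NormedAddCommGroup F]
    [InnerProductSpace ℝ F] [CompleteSpace F] {B : F → ℝ} {b : F} {x : ℝ → F} {v : F} {t : ℝ}
    (hB : HasGradientAt B b (x t)) (hx : HasDerivAt x v t) :
    HasDerivAt (fun s => B (x s)) (inner ℝ b v) t :=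
  (hasGradientAt_iff_hasFDerivAt.mp hB).comp_hasDerivAt t hx

theorem stmt_0_general {n k : ℕ}
    (X X₀ Xu : Set (EuclideanSpace ℝ (Fin n)))
    (D : Set (EuclideanSpace ℝ (Fin k)))
    (f : EuclideanSpace ℝ (Fin n) → EuclideanSpace ℝ (Fin k) → EuclideanSpace ℝ (Fin n))
    (B : EuclideanSpace ℝ (Fin n) → ℝ)
    (gradB : EuclideanSpace ℝ (Fin n) → EuclideanSpace ℝ (Fin n))
    (hB : ∀ x, HasGradientAt B (gradB x) x)
    (hinit : ∀ x ∈ X₀, B x ≤ 0)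
    (hunsafe : ∀ x ∈ Xu, B x > 0)
    (hborder : ∀ x ∈ X, ∀ d ∈ D, B x = 0 → inner ℝ (gradB x) (f x d) < (0 : ℝ))
    (x : ℝ → EuclideanSpace ℝ (Fin n)) (d : EuclideanSpace ℝ (Fin k))
    (hd : d ∈ D) (hx0 : x 0 ∈ X₀)
    (hxX : ∀ t ≥ (0 : ℝ), x t ∈ X)
    (hode : ∀ t ≥ (0 : ℝ), HasDerivAt x (f (x t) d) t) :
    ∀ t ≥ (0 : ℝ), B (x t) ≤ 0 ∧ x t ∉ Xu := by
  have hBx_nonpos : ∀ t ≥ (0 : ℝ), B (x t) ≤ 0 :=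
    nonpos_of_hasDerivAt_neg_of_eq_zero (fun t ht => (hB (x t)).comp_hasDerivAt (hode t ht))
      (hinit _ hx0) (fun t ht => hborder _ (hxX t ht) d hd)
  exact fun t ht => ⟨hBx_nonpos t ht, fun hmem => (hunsafe _ hmem).not_ge (hBx_nonpos t ht)⟩

/-- Barrier certificate theorem (Theorem 1 / safety of trajectories):
if `B ≤ 0` on `X₀`, `B > 0` on `Xᵤ`, and `B x = 0` implies `⟪∇B x, f x d⟫ < 0`
on `X × D`, then any solution starting in `X₀` with constant disturbance
`d ∈ D` satisfies `B (x t) ≤ 0` for all `t ≥ 0`, hence never enters `Xᵤ`. -/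
theorem stmt_0 {n k : ℕ}
    (X X₀ Xu : Set (EuclideanSpace ℝ (Fin n)))
    (D : Set (EuclideanSpace ℝ (Fin k)))
    (f : EuclideanSpace ℝ (Fin n) → EuclideanSpace ℝ (Fin k) → EuclideanSpace ℝ (Fin n))
    (B : EuclideanSpace ℝ (Fin n) → ℝ)
    (gradB : EuclideanSpace ℝ (Fin n) → EuclideanSpace ℝ (Fin n))
    (hX₀ : X₀ ⊆ X) (hXu : Xu ⊆ X)
    (hB : ∀ x, HasGradientAt B (gradB x) x)
    (hinit : ∀ x ∈ X₀, B x ≤ 0)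
    (hunsafe : ∀ x ∈ Xu, B x > 0)
    (hborder : ∀ x ∈ X, ∀ d ∈ D, B x = 0 → inner ℝ (gradB x) (f x d) < (0 : ℝ))
    (x : ℝ → EuclideanSpace ℝ (Fin n)) (d : EuclideanSpace ℝ (Fin k))
    (hd : d ∈ D) (hx0 : x 0 ∈ X₀)
    (hxX : ∀ t ≥ (0 : ℝ), x t ∈ X)
    (hode : ∀ t ≥ (0 : ℝ), HasDerivAt x (f (x t) d) t) :
    ∀ t ≥ (0 : ℝ), B (x t) ≤ 0 ∧ x t ∉ Xu :=
  stmt_0_general X X₀ Xu D f B gradB hB hinit hunsafe hborder x d hd hx0 hxX hode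
end

section
/- Let B : ℝⁿ → ℝ be continuously differentiable and let x : [0,∞) → ℝⁿ be differentiable with B(x(0)) ≤ 0. If for every t ≥ 0, B(x(t)) = 0 implies d/dt B(x(t)) < 0, then B(x(t)) ≤ 0 for all t ≥ 0. -/
open Set

theorem nonpos_of_deriv_neg_of_eq_zero {g : ℝ → ℝ} {a : ℝ}
    (hg : ∀ t ≥ a, DifferentiableAt ℝ g t) (ha : g a ≤ 0)
    (hdec : ∀ t ≥ a, g t = 0 → deriv g t < 0) :
    ∀ t ≥ a, g t ≤ 0 := by
  intro T hT
  have hcont : ContinuousOn g (Icc a T) := fun t ht => (hg t ht.1).continuousAt.continuousWithinAt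
  exact image_le_of_deriv_right_lt_deriv_boundary hcont
    (fun t ht => (hg t ht.1).hasDerivAt.hasDerivWithinAt) (B' := fun _ => 0) ha
    (fun _ => hasDerivAt_const _ _) (fun t ht => hdec t ht.1) ⟨hT, le_rfl⟩

/-- Key analytic lemma: a `C¹` scalar quantity along a differentiable trajectory
that is strictly decreasing whenever it hits zero, and starts nonpositive,
stays nonpositive forever. -/
theorem stmt_1 {n : ℕ}
    (B : EuclideanSpace ℝ (Fin n) → ℝ)
    (hB : ContDiff ℝ 1 B)
    (x : ℝ → EuclideanSpace ℝ (Fin n))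
    (hx : Differentiable ℝ x)
    (h0 : B (x 0) ≤ 0)
    (hdec : ∀ t ≥ (0 : ℝ), B (x t) = 0 → deriv (fun s => B (x s)) t < 0) :
    ∀ t ≥ (0 : ℝ), B (x t) ≤ 0 :=
  have hBx : Differentiable ℝ (fun s => B (x s)) := (hB.differentiable one_ne_zero).comp hx
  nonpos_of_deriv_neg_of_eq_zero (fun t _ => hBx t) h0 hdec
end

section
/- Let g : ℝ → ℝ be differentiable with g(0) ≤ 0. If for all t ≥ 0, g(t) = 0 implies g'(t) < 0, then g(t) ≤ 0 for all t ≥ 0. -/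
/-- One-dimensional barrier invariance lemma. -/
theorem stmt_2 (g : ℝ → ℝ) (hg : Differentiable ℝ g) (h0 : g 0 ≤ 0)
    (hdec : ∀ t ≥ (0 : ℝ), g t = 0 → deriv g t < 0) :
    ∀ t ≥ (0 : ℝ), g t ≤ 0 := by
  intro t ht
  by_contra hgt
  push_neg at hgt
  have hcont : Continuous g := hg.continuous
  -- set of zeros in [0, t]
  set S : Set ℝ := {u | u ∈ Set.Icc 0 t ∧ g u = 0} with hS
  have hSne : S.Nonempty := by
    obtain ⟨u, hu, hgu⟩ := intermediate_value_Icc ht hcont.continuousOn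
      (Set.mem_Icc.2 ⟨h0, hgt.le⟩)
    exact ⟨u, hu, hgu⟩
  have hSclosed : IsClosed S :=
    IsClosed.inter isClosed_Icc (isClosed_eq hcont continuous_const)
  have hScompact : IsCompact S :=
    (isCompact_Icc (a := (0:ℝ)) (b := t)).of_isClosed_subset hSclosed fun u hu => hu.1
  obtain ⟨s, ⟨⟨hs0, hst⟩, hgs⟩, hsup⟩ :
      ∃ s, s ∈ S ∧ s = sSup S := ⟨sSup S, hScompact.sSup_mem hSne, rfl⟩
  have hstlt : s < t := lt_of_le_of_ne hst (by rintro rfl; exact absurd hgs hgt.ne')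
  have hderiv : deriv g s < 0 := hdec s hs0 hgs
  -- slope is eventually negative to the right of s
  have hslope : Filter.Tendsto (slope g s) (nhdsWithin s {s}ᶜ) (nhds (deriv g s)) :=
    hasDerivAt_iff_tendsto_slope.1 (hg s).hasDerivAt
  have hev : ∀ᶠ u in nhdsWithin s (Set.Ioi s), slope g s u < 0 :=
    ((hslope.eventually (gt_mem_nhds hderiv)).filter_mono
      (nhdsWithin_mono s fun u hu => ne_of_gt hu))
  have hev2 : ∀ᶠ u in nhdsWithin s (Set.Ioi s), u ∈ Set.Ioo s t :=
    Filter.eventually_iff.mpr (Ioo_mem_nhdsGT_of_mem ⟨le_refl s, hstlt⟩)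
  obtain ⟨u, hslopeu, husm⟩ := (hev.and hev2).exists
  obtain ⟨hsu, hut⟩ := husm
  have hgu : g u < 0 := by
    have : (g u - g s) / (u - s) < 0 := by
      simpa [slope_def_field, div_eq_inv_mul] using hslopeu
    rw [hgs, sub_zero] at this
    rcases div_neg_iff.1 this with h | h
    · linarith [h.2]
    · exact h.1
  -- IVT between u and t gives a zero beyond s, contradicting sSup
  obtain ⟨v, hv, hgv⟩ := intermediate_value_Icc hut.le hcont.continuousOn
    (Set.mem_Icc.2 ⟨hgu.le, hgt.le⟩)
  have hvS : v ∈ S := ⟨⟨le_trans hs0 (le_trans hsu.le hv.1), hv.2⟩, hgv⟩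
  have : v ≤ s := hsup ▸ le_csSup hScompact.bddAbove hvS
  linarith [hv.1]
end
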